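/- Let (G, σ) be a signed graph whose underlying graph is the full join G_1 ⋈ G_2 of two vertex-disjoint graphs, with no triangle whose three edges are all negative and no four vertices inducing a copy of (K_4, M), the complete graph on 4 vertices whose negative edges form a perfect matching. If each of the signed subgraphs induced on V(G_1) and on V(G_2) contains a negative edge, then the spanning subgraph (G, σ)⁻ formed by the negative edges of (G, σ) has chromatic number at most 6, and hence χ_b(G, σ) ≤ 6. -/

import Mathlib

open SimpleGraph

namespace SignedGS

variable {V : Type*}

/-- The sign of a walk in a signed graph: the product of the signs of its edges. -/
def walkSign {G : SimpleGraph V} (σ : Sym2 V → ℤˣ) {u v : V} (w : G.Walk u v) : ℤˣ :=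
  (w.edges.map σ).prod

/-- `X` is a balanced set of `(G, σ)`: every cycle of the subgraph induced on `X`
is positive. -/
def IsBalancedSet (G : SimpleGraph V) (σ : Sym2 V → ℤˣ) (X : Set V) : Prop :=
  ∀ ⦃v : V⦄ (w : G.Walk v v), w.IsCycle → (∀ u ∈ w.support, u ∈ X) → walkSign σ w = 1

/-- `(G, σ)` can be covered by `n` balanced sets. -/
def BalancedColorable (G : SimpleGraph V) (σ : Sym2 V → ℤˣ) (n : ℕ) : Prop :=
  ∃ f : V → Fin n, ∀ i : Fin n, IsBalancedSet G σ {v | f v = i}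

/-- The balanced chromatic number of `(G, σ)`. -/
noncomputable def balancedChromNum (G : SimpleGraph V) (σ : Sym2 V → ℤˣ) : ℕ :=
  sInf {n | BalancedColorable G σ n}

/-- The set `X ⊆ V` can be covered by `n` sets each of which is balanced in `(G, σ)`. -/
def BalancedColorableOn (G : SimpleGraph V) (σ : Sym2 V → ℤˣ) (X : Set V) (n : ℕ) : Prop :=
  ∃ f : V → Fin n, ∀ i : Fin n, IsBalancedSet G σ {v | v ∈ X ∧ f v = i}

/-- The balanced chromatic number of the signed subgraph of `(G, σ)` induced on `X`. -/
noncomputable def balancedChromNumOn (G : SimpleGraph V) (σ : Sym2 V → ℤˣ) (X : Set V) : ℕ :=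
  sInf {n | BalancedColorableOn G σ X n}

/-- `(G, σ)⁻` : the spanning subgraph of `G` consisting of the negative edges. -/
def negSubgraph (G : SimpleGraph V) (σ : Sym2 V → ℤˣ) : SimpleGraph V where
  Adj u v := G.Adj u v ∧ σ s(u, v) = -1
  symm := by
    constructor
    intro u v h
    refine ⟨h.1.symm, ?_⟩
    rw [Sym2.eq_swap]
    exact h.2
  loopless := by constructor; intro v h; exact G.loopless.irrefl v h.1

/-- Two signatures on `G` are switching equivalent. -/
def SwitchEquiv (G : SimpleGraph V) (σ σ' : Sym2 V → ℤˣ) : Prop :=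
  ∃ η : V → ℤˣ, ∀ u v : V, G.Adj u v → σ' s(u, v) = η u * σ s(u, v) * η v

/-- Every triangle of `(G, σ)` is positive. -/
def AllTrianglesPositive (G : SimpleGraph V) (σ : Sym2 V → ℤˣ) : Prop :=
  ∀ u v w : V, G.Adj u v → G.Adj v w → G.Adj u w →
    σ s(u, v) * σ s(v, w) * σ s(u, w) = 1

/-- `G` contains an induced copy of `F`. -/
def HasInducedCopy {W : Type*} (F : SimpleGraph W) (G : SimpleGraph V) : Prop :=
  ∃ f : W ↪ V, ∀ a b : W, G.Adj (f a) (f b) ↔ F.Adj a b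

/-- The star `K_{1,m}` with center `0` and `m` leaves. -/
def starGraph (m : ℕ) : SimpleGraph (Fin (m + 1)) where
  Adj a b := (a = 0 ∨ b = 0) ∧ a ≠ b
  symm := by constructor; rintro a b ⟨h1, h2⟩; exact ⟨h1.symm, h2.symm⟩
  loopless := by constructor; rintro a ⟨_, h⟩; exact h rfl

private def disjUnionAdj {W1 W2 : Type*} (F1 : SimpleGraph W1) (F2 : SimpleGraph W2) :
    W1 ⊕ W2 → W1 ⊕ W2 → Prop
  | .inl x, .inl y => F1.Adj x y
  | .inr x, .inr y => F2.Adj x y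
  | _, _ => False

/-- The disjoint union `F1 + F2` of two graphs. -/
def disjUnion {W1 W2 : Type*} (F1 : SimpleGraph W1) (F2 : SimpleGraph W2) :
    SimpleGraph (W1 ⊕ W2) where
  Adj := disjUnionAdj F1 F2
  symm := by
    constructor
    rintro (x | x) (y | y) h
    · exact F1.adj_symm h
    · exact h.elim
    · exact h.elim
    · exact F2.adj_symm h
  loopless := by
    constructor
    rintro (x | x) h
    · exact F1.loopless.irrefl x h
    · exact F2.loopless.irrefl x h

private def fullJoinAdj {W1 W2 : Type*} (G1 : SimpleGraph W1) (G2 : SimpleGraph W2) :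
    W1 ⊕ W2 → W1 ⊕ W2 → Prop
  | .inl x, .inl y => G1.Adj x y
  | .inr x, .inr y => G2.Adj x y
  | _, _ => True

/-- The full join `G1 ⋈ G2` of two vertex-disjoint graphs. -/
def fullJoin {W1 W2 : Type*} (G1 : SimpleGraph W1) (G2 : SimpleGraph W2) :
    SimpleGraph (W1 ⊕ W2) where
  Adj := fullJoinAdj G1 G2
  symm := by
    constructor
    rintro (x | x) (y | y) h
    · exact G1.adj_symm h
    · trivial
    · trivial
    · exact G2.adj_symm h
  loopless := by
    constructor
    rintro (x | x) h
    · exact G1.loopless.irrefl x h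
    · exact G2.loopless.irrefl x h

/-- The linear forest with `l` components, the `i`-th component being a path
on `m i` vertices. -/
def linearForest (l : ℕ) (m : Fin l → ℕ) : SimpleGraph (Σ i : Fin l, Fin (m i)) where
  Adj a b := a.1 = b.1 ∧ ((a.2 : ℕ) + 1 = (b.2 : ℕ) ∨ (b.2 : ℕ) + 1 = (a.2 : ℕ))
  symm := by constructor; rintro a b ⟨h1, h2⟩; exact ⟨h1.symm, h2.symm⟩
  loopless := by constructor; rintro a ⟨_, h⟩; omega

/-- `(G, σ)` has an induced subgraph switching equivalent to the all-negative `K_4`. -/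
def HasSwitchK4Neg (G : SimpleGraph V) (σ : Sym2 V → ℤˣ) : Prop :=
  ∃ f : Fin 4 ↪ V, (∀ a b : Fin 4, a ≠ b → G.Adj (f a) (f b)) ∧
    ∃ η : Fin 4 → ℤˣ, ∀ a b : Fin 4, a ≠ b → η a * σ s(f a, f b) * η b = -1

/-- `(G, σ)` has a triangle all of whose edges are negative. -/
def HasNegTriangle (G : SimpleGraph V) (σ : Sym2 V → ℤˣ) : Prop :=
  ∃ u v w : V, G.Adj u v ∧ G.Adj v w ∧ G.Adj u w ∧
    σ s(u, v) = -1 ∧ σ s(v, w) = -1 ∧ σ s(u, w) = -1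

/-- `(G, σ)` has four vertices inducing a copy of `(K_4, M)`: a complete graph on four
vertices whose negative edges form a perfect matching. -/
def HasK4M (G : SimpleGraph V) (σ : Sym2 V → ℤˣ) : Prop :=
  ∃ a b c d : V, a ≠ b ∧ a ≠ c ∧ a ≠ d ∧ b ≠ c ∧ b ≠ d ∧ c ≠ d ∧
    G.Adj a b ∧ G.Adj a c ∧ G.Adj a d ∧ G.Adj b c ∧ G.Adj b d ∧ G.Adj c d ∧
    σ s(a, b) = -1 ∧ σ s(c, d) = -1 ∧
    σ s(a, c) = 1 ∧ σ s(a, d) = 1 ∧ σ s(b, c) = 1 ∧ σ s(b, d) = 1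

/-- The vertices of the shift graph `S_{k,n}`: strictly increasing `k`-sequences
with values in `{1, …, n}`. -/
def ShiftVertex (k n : ℕ) : Type :=
  {s : Fin k → ℕ // StrictMono s ∧ ∀ i, s i ∈ Finset.Icc 1 n}

/-- `b` is obtained from `a` by shifting: `b = (a_2, …, a_k, t)` for some `t`. -/
def ShiftFollows {k n : ℕ} (a b : ShiftVertex k n) : Prop :=
  ∀ (i : ℕ) (h : i + 1 < k), b.1 ⟨i, Nat.lt_of_succ_lt h⟩ = a.1 ⟨i + 1, h⟩

/-- The shift graph `S_{k,n}`. -/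
def shiftGraph (k n : ℕ) : SimpleGraph (ShiftVertex k n) where
  Adj a b := a ≠ b ∧ (ShiftFollows a b ∨ ShiftFollows b a)
  symm := by constructor; rintro a b ⟨h1, h2⟩; exact ⟨h1.symm, h2.symm⟩
  loopless := by constructor; rintro a ⟨h, _⟩; exact h rfl


/-!
Fix a negative edge `uv` on one side of the join. Every vertex `w` on the other side is adjacent
to both `u` and `v`; give it class 0, 1 or 2 according as `wu` is negative, `wv` is negative, or
both are positive. Two vertices of the same class joined by a negative edge would span an
all-negative triangle with `u` (class 0) or `v` (class 1), or a `(K_4, M)` with `u, v` (class 2).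
Classes taken separately on the two sides therefore 6-colour `(G, σ)⁻`, and a colour class of
`(G, σ)⁻` carries no negative edge, so it is balanced.
-/

section Balanced

variable {G : SimpleGraph V} {σ : Sym2 V → ℤˣ}

theorem isBalancedSet_of_forall_not_negAdj {X : Set V}
    (hX : ∀ a ∈ X, ∀ b ∈ X, ¬ (negSubgraph G σ).Adj a b) : IsBalancedSet G σ X := by
  intro v w _ hwX
  refine List.prod_eq_one fun s hs => ?_
  obtain ⟨e, he, rfl⟩ := List.mem_map.mp hs
  induction e using Sym2.ind with
  | _ a b =>
    by_contra hne
    exact hX a (hwX a (w.fst_mem_support_of_mem_edges he)) b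
      (hwX b (w.snd_mem_support_of_mem_edges he))
      ⟨w.adj_of_mem_edges he, Int.units_ne_iff_eq_neg.mp hne⟩

theorem balancedColorable_of_colorable {n : ℕ} (h : (negSubgraph G σ).Colorable n) :
    BalancedColorable G σ n := by
  obtain ⟨C⟩ := h
  exact ⟨C, fun i => isBalancedSet_of_forall_not_negAdj fun a ha b hb hab =>
    C.valid hab (ha.trans hb.symm)⟩

theorem balancedChromNum_le_of_colorable {n : ℕ} (h : (negSubgraph G σ).Colorable n) :
    balancedChromNum G σ ≤ n :=
  Nat.sInf_le (balancedColorable_of_colorable h)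

end Balanced

def negNbrClass (σ : Sym2 V → ℤˣ) (u v w : V) : Fin 3 :=
  if σ s(w, u) = -1 then 0 else if σ s(w, v) = -1 then 1 else 2

theorem negNbrClass_ne_of_negAdj {G : SimpleGraph V} {σ : Sym2 V → ℤˣ}
    (hT : ¬ HasNegTriangle G σ) (hK : ¬ HasK4M G σ) {u v a b : V}
    (huv : (negSubgraph G σ).Adj u v) (hab : (negSubgraph G σ).Adj a b)
    (hau : G.Adj a u) (hav : G.Adj a v) (hbu : G.Adj b u) (hbv : G.Adj b v) :
    negNbrClass σ u v a ≠ negNbrClass σ u v b := by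
  have hpos {x y : V} (h : ¬ σ s(x, y) = -1) : σ s(x, y) = 1 := Int.units_ne_iff_eq_neg.mp h
  unfold negNbrClass
  split_ifs <;> first | decide | skip
  · exact (hT ⟨a, b, u, hab.1, hbu, hau, hab.2, ‹σ s(b, u) = -1›, ‹σ s(a, u) = -1›⟩).elim
  · exact (hT ⟨a, b, v, hab.1, hbv, hav, hab.2, ‹σ s(b, v) = -1›, ‹σ s(a, v) = -1›⟩).elim
  · exact (hK ⟨a, b, u, v, hab.1.ne, hau.ne, hav.ne, hbu.ne, hbv.ne, huv.1.ne,
      hab.1, hau, hav, hbu, hbv, huv.1, hab.2, huv.2, hpos ‹_›, hpos ‹_›, hpos ‹_›, hpos ‹_›⟩).elim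

theorem negSubgraph_fullJoin_colorable {W1 W2 : Type*} {G1 : SimpleGraph W1}
    {G2 : SimpleGraph W2} {σ : Sym2 (W1 ⊕ W2) → ℤˣ}
    (hT : ¬ HasNegTriangle (fullJoin G1 G2) σ) (hK : ¬ HasK4M (fullJoin G1 G2) σ)
    {x1 y1 : W1} (h1 : (negSubgraph (fullJoin G1 G2) σ).Adj (.inl x1) (.inl y1))
    {x2 y2 : W2} (h2 : (negSubgraph (fullJoin G1 G2) σ).Adj (.inr x2) (.inr y2)) :
    (negSubgraph (fullJoin G1 G2) σ).Colorable 6 := by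
  let C : (negSubgraph (fullJoin G1 G2) σ).Coloring (Fin 3 ⊕ Fin 3) :=
    Coloring.mk (Sum.elim (fun a => .inl (negNbrClass σ (.inr x2) (.inr y2) (.inl a)))
      (fun b => .inr (negNbrClass σ (.inl x1) (.inl y1) (.inr b)))) <| by
      rintro (a | a) (b | b) hab
      · exact Sum.inl_injective.ne <| negNbrClass_ne_of_negAdj hT hK h2 hab
          trivial trivial trivial trivial
      · exact Sum.inl_ne_inr
      · exact Sum.inr_ne_inl
      · exact Sum.inr_injective.ne <| negNbrClass_ne_of_negAdj hT hK h1 hab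
          trivial trivial trivial trivial
  simpa using C.colorable

theorem stmt15_general {W1 W2 : Type*}
    (G1 : SimpleGraph W1) (G2 : SimpleGraph W2) (σ : Sym2 (W1 ⊕ W2) → ℤˣ)
    (h1 : ¬ HasNegTriangle (fullJoin G1 G2) σ)
    (h2 : ¬ HasK4M (fullJoin G1 G2) σ)
    (h3 : ∃ x y : W1, G1.Adj x y ∧ σ s(Sum.inl x, Sum.inl y) = -1)
    (h4 : ∃ x y : W2, G2.Adj x y ∧ σ s(Sum.inr x, Sum.inr y) = -1) :
    (negSubgraph (fullJoin G1 G2) σ).chromaticNumber ≤ 6 ∧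
      balancedChromNum (fullJoin G1 G2) σ ≤ 6 := by
  obtain ⟨x1, y1, hxy1⟩ := h3
  obtain ⟨x2, y2, hxy2⟩ := h4
  have hcol := negSubgraph_fullJoin_colorable h1 h2 hxy1 hxy2
  exact ⟨hcol.chromaticNumber_le, balancedChromNum_le_of_colorable hcol⟩

/-- in a full join with no all-negative triangle and no (K_4,M) and a
negative edge on each side, the negative subgraph is 6-colorable and χ_b ≤ 6. -/
theorem stmt15 {W1 W2 : Type*} [Fintype W1] [Fintype W2]
    (G1 : SimpleGraph W1) (G2 : SimpleGraph W2) (σ : Sym2 (W1 ⊕ W2) → ℤˣ)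
    (h1 : ¬ HasNegTriangle (fullJoin G1 G2) σ)
    (h2 : ¬ HasK4M (fullJoin G1 G2) σ)
    (h3 : ∃ x y : W1, G1.Adj x y ∧ σ s(Sum.inl x, Sum.inl y) = -1)
    (h4 : ∃ x y : W2, G2.Adj x y ∧ σ s(Sum.inr x, Sum.inr y) = -1) :
    (negSubgraph (fullJoin G1 G2) σ).chromaticNumber ≤ 6 ∧
      balancedChromNum (fullJoin G1 G2) σ ≤ 6 :=
  stmt15_general G1 G2 σ h1 h2 h3 h4

end SignedGS
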